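/- Let u and v be partial permutations of sizes p×b and a×q respectively. Then there exists a unique partial permutation w of size (a+p)×(b+q) whose Rothe diagram is D_w = ([a]×[b]) ∪ {(i, j+b) : (i,j) ∈ D_v} ∪ {(i+a, j) : (i,j) ∈ D_u}. -/
import Mathlib


open scoped Classical
noncomputable section

/-! ## Partial permutation matrices (1-indexed) -/

/-- A partial permutation: an `rows × cols` 0-1 matrix (1-indexed) with at most one 1
in each row and in each column.  `mat i j` expresses that there is a 1 in cell `(i,j)`. -/
structure PartialPerm where
  rows : ℕ
  cols : ℕ
  mat : ℕ → ℕ → Prop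
  mat_support : ∀ i j, mat i j → 1 ≤ i ∧ i ≤ rows ∧ 1 ≤ j ∧ j ≤ cols
  mat_row : ∀ i j j', mat i j → mat i j' → j = j'
  mat_col : ∀ i i' j, mat i j → mat i' j → i = i'

namespace PartialPerm

/-- The Rothe diagram of a partial permutation. -/
def diagram (w : PartialPerm) : Set (ℕ × ℕ) :=
  {p | 1 ≤ p.1 ∧ p.1 ≤ w.rows ∧ 1 ≤ p.2 ∧ p.2 ≤ w.cols ∧
    (∀ j', j' ≤ p.2 → ¬ w.mat p.1 j') ∧ (∀ i', i' ≤ p.1 → ¬ w.mat i' p.2)}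

/-- The rank function: the number of 1's in the top-left `i × j` submatrix. -/
def rank (w : PartialPerm) (i j : ℕ) : ℕ :=
  Set.ncard {p : ℕ × ℕ | p.1 ≤ i ∧ p.2 ≤ j ∧ w.mat p.1 p.2}

/-- The essential set. -/
def ess (w : PartialPerm) : Set (ℕ × ℕ) :=
  {p | p ∈ w.diagram ∧ (p.1 + 1, p.2) ∉ w.diagram ∧ (p.1, p.2 + 1) ∉ w.diagram}

/-- The dominant part of the Rothe diagram. -/
def domPart (w : PartialPerm) : Set (ℕ × ℕ) :=
  {p | p ∈ w.diagram ∧ w.rank p.1 p.2 = 0}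

/-- `Ess'(w) = Ess(w) \ Dom(w)`. -/
def essPrime (w : PartialPerm) : Set (ℕ × ℕ) := w.ess \ w.domPart

/-- The Lehmer code: the number of diagram cells in row `i`. -/
def code (w : PartialPerm) (i : ℕ) : ℕ := Set.ncard {j | (i, j) ∈ w.diagram}

/-- Transpose of a partial permutation. -/
def transpose (w : PartialPerm) : PartialPerm where
  rows := w.cols
  cols := w.rows
  mat i j := w.mat j i
  mat_support := fun i j h => by
    obtain ⟨h1, h2, h3, h4⟩ := w.mat_support j i h
    exact ⟨h3, h4, h1, h2⟩
  mat_row := fun i j j' h h' => w.mat_col j j' i h h'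
  mat_col := fun i i' j h h' => w.mat_row j i i' h h'

/-- `w` is (the matrix of) a permutation in `S_n`. -/
def IsPerm (n : ℕ) (w : PartialPerm) : Prop :=
  w.rows = n ∧ w.cols = n ∧ (∀ i, 1 ≤ i → i ≤ n → ∃ j, w.mat i j) ∧
    (∀ j, 1 ≤ j → j ≤ n → ∃ i, w.mat i j)

/-- `w'` is the completion of the partial permutation `w` to a permutation in `S_N`:
it extends `w` and has the same Rothe diagram. -/
def IsCompletion (w : PartialPerm) (N : ℕ) (w' : PartialPerm) : Prop :=
  IsPerm N w' ∧ w.rows ≤ N ∧ w.cols ≤ N ∧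
    (∀ i j, 1 ≤ i → i ≤ w.rows → 1 ≤ j → j ≤ w.cols → (w.mat i j ↔ w'.mat i j)) ∧
    w'.diagram = w.diagram

end PartialPerm

/-! ## Right multiplication by a transposition -/

/-- The transposition of `a` and `b` as a function on `ℕ`. -/
def swapNat (a b i : ℕ) : ℕ := if i = a then b else if i = b then a else i

lemma swapNat_invol (a b i : ℕ) : swapNat a b (swapNat a b i) = i := by
  simp only [swapNat]; split_ifs <;> omega

/-- The product `w · t_{ab}` with the transposition `t_{ab}` (so row `i` of the product
is row `swapNat a b i` of `w`). -/
def mulT (w : PartialPerm) (a b : ℕ) : PartialPerm where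
  rows := w.rows
  cols := w.cols
  mat i j := 1 ≤ i ∧ i ≤ w.rows ∧ w.mat (swapNat a b i) j
  mat_support := fun i j h =>
    ⟨h.1, h.2.1, (w.mat_support _ _ h.2.2).2.2.1, (w.mat_support _ _ h.2.2).2.2.2⟩
  mat_row := fun i j j' h h' => w.mat_row _ j j' h.2.2 h'.2.2
  mat_col := fun i i' j h h' => by
    have hs : swapNat a b i = swapNat a b i' := w.mat_col _ _ j h.2.2 h'.2.2
    have := congrArg (swapNat a b) hs
    rwa [swapNat_invol, swapNat_invol] at this

/-- The partial permutation obtained from `w` by deleting the dot at `(i0, j0)`. -/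
def removeDot (w : PartialPerm) (i0 j0 : ℕ) : PartialPerm where
  rows := w.rows
  cols := w.cols
  mat i j := w.mat i j ∧ ¬(i = i0 ∧ j = j0)
  mat_support := fun i j h => w.mat_support i j h.1
  mat_row := fun i j j' h h' => w.mat_row i j j' h.1 h'.1
  mat_col := fun i i' j h h' => w.mat_col i i' j h.1 h'.1

/-! ## Bruhat order, transitions -/

/-- Bruhat order via rank functions: `v ≤ w` iff `r_v ≥ r_w` pointwise. -/
def bruhatLE (v w : PartialPerm) : Prop := ∀ i j, w.rank i j ≤ v.rank i j

def bruhatLT (v w : PartialPerm) : Prop := bruhatLE v w ∧ v ≠ w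

/-- Covering relation of Bruhat order on `S_n`. -/
def bruhatCov (n : ℕ) (v w : PartialPerm) : Prop :=
  bruhatLT v w ∧ ∀ u, PartialPerm.IsPerm n u → bruhatLT v u → bruhatLT u w → False

/-- `I(v,r) = {i < r : v ⋖ v t_{ir}}`. -/
def IsetI (n : ℕ) (v : PartialPerm) (r : ℕ) : Set ℕ :=
  {i | 1 ≤ i ∧ i < r ∧ bruhatCov n v (mulT v i r)}

/-- `Φ(v,r) = {v t_{ir} : i ∈ I(v,r)}`. -/
def PhiSet (n : ℕ) (v : PartialPerm) (r : ℕ) : Set PartialPerm :=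
  {u | ∃ i ∈ IsetI n v r, u = mulT v i r}

/-- Lexicographic order on cells. -/
def lexLE (p q : ℕ × ℕ) : Prop := p.1 < q.1 ∨ (p.1 = q.1 ∧ p.2 ≤ q.2)

/-- `(r,s)` is the (lexicographically) maximal corner of `D_w`. -/
def IsMaxCorner (w : PartialPerm) (r s : ℕ) : Prop :=
  (r, s) ∈ w.diagram ∧ ∀ p ∈ w.diagram, lexLE p (r, s)

/-- `(i,j)` is an inversion of `w`. -/
def IsInversion (w : PartialPerm) (p : ℕ × ℕ) : Prop :=
  p.1 < p.2 ∧ ∃ a b, w.mat p.1 a ∧ w.mat p.2 b ∧ b < a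

/-- The dot `(i,j)` of `w` is a pivot with respect to the maximal corner `(r,s)`:
it lies strictly northwest of `(r,s)` and is maximally southeast among such dots. -/
def IsPivot (w : PartialPerm) (r s i j : ℕ) : Prop :=
  w.mat i j ∧ i < r ∧ j < s ∧
    ∀ i' j', w.mat i' j' → i' < r → j' < s → i ≤ i' → j ≤ j' → i = i' ∧ j = j'

/-- The marching operation `w →^i u` of Knutson and Yong at the pivot in row `i`:
the lines emanating from the pivot dot are removed, and every diagram cell in the
rectangle spanned by the pivot and the maximal corner moves strictly to the northwest,
filling a position vacated either by the removed lines or by another cell. -/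
def Marches (w : PartialPerm) (i : ℕ) (u : PartialPerm) : Prop :=
  ∃ r s j0, IsMaxCorner w r s ∧ w.mat i j0 ∧ IsPivot w r s i j0 ∧
    u.rows = w.rows ∧ u.cols = w.cols ∧ PartialPerm.IsPerm w.rows u ∧
    (let R : Set (ℕ × ℕ) := w.diagram ∩ Set.Icc (i, j0) (r, s);
     ∃ θ : ℕ × ℕ → ℕ × ℕ, Set.InjOn θ R ∧
        (∀ c ∈ R, θ c ≠ c ∧ (θ c).1 ≤ c.1 ∧ (θ c).2 ≤ c.2 ∧
          (θ c ∈ (removeDot w i j0).diagram \ w.diagram ∨ θ c ∈ R)) ∧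
        u.diagram = (w.diagram \ R) ∪ θ '' R)

/-! ## Block sums and classes of (partial) permutations -/

/-- `w` is the block sum `u ⊞ v`. -/
def IsBlockSum (u v w : PartialPerm) : Prop :=
  w.rows = v.rows + u.rows ∧ w.cols = u.cols + v.cols ∧
  w.diagram =
    {p : ℕ × ℕ | 1 ≤ p.1 ∧ p.1 ≤ v.rows ∧ 1 ≤ p.2 ∧ p.2 ≤ u.cols}
    ∪ (fun p : ℕ × ℕ => (p.1, p.2 + u.cols)) '' v.diagram
    ∪ (fun p : ℕ × ℕ => (p.1 + v.rows, p.2)) '' u.diagram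

/-- `w` is the iterated block sum `u₁ ⊞ (u₂ ⊞ (⋯ ⊞ u_k))` of a nonempty list. -/
inductive IsBlockSumList : List PartialPerm → PartialPerm → Prop
  | single (u : PartialPerm) : IsBlockSumList [u] u
  | cons (u : PartialPerm) {us : List PartialPerm} {v w : PartialPerm} :
      IsBlockSumList us v → IsBlockSum u v w → IsBlockSumList (u :: us) w

/-- A partial permutation is predominant if its Lehmer code has the form
`(λ₁, …, λ_k, 0^h, ℓ, 0, 0, …)` for a partition `λ` and `h, ℓ ≥ 0`. -/
def IsPredominant (w : PartialPerm) : Prop :=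
  ∃ k h ℓ : ℕ,
    (∀ i i', 1 ≤ i → i ≤ i' → i' ≤ k → w.code i' ≤ w.code i) ∧
    (∀ i, k < i → i < k + h + 1 → w.code i = 0) ∧
    w.code (k + h + 1) = ℓ ∧
    (∀ i, k + h + 1 < i → w.code i = 0)

/-- A partial permutation is copredominant if its transpose is predominant. -/
def IsCopredominant (w : PartialPerm) : Prop := IsPredominant w.transpose

/-- A partial permutation is vexillary if the rows of its Rothe diagram are totally
ordered by inclusion. -/
def IsVexillary (w : PartialPerm) : Prop :=
  ∀ i i', {j | (i, j) ∈ w.diagram} ⊆ {j | (i', j) ∈ w.diagram} ∨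
    {j | (i', j) ∈ w.diagram} ⊆ {j | (i, j) ∈ w.diagram}

/-- A partial permutation is block predominant if it is a block sum of finitely many
predominant partial permutations. -/
def IsBlockPredominant (w : PartialPerm) : Prop :=
  ∃ L : List PartialPerm, (∀ u ∈ L, IsPredominant u) ∧ IsBlockSumList L w

/-- A permutation `w ∈ S_n` is block predominant. -/
def IsBlockPredominantPerm (n : ℕ) (w : PartialPerm) : Prop :=
  PartialPerm.IsPerm n w ∧
    ∃ (L : List PartialPerm) (b : PartialPerm),
      (∀ u ∈ L, IsPredominant u) ∧ IsBlockSumList L b ∧ PartialPerm.IsCompletion b n w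

/-- A permutation `w ∈ S_n` is banner: it is (the completion of) a block sum of
predominant, copredominant and vexillary partial permutations. -/
def IsBanner (n : ℕ) (w : PartialPerm) : Prop :=
  PartialPerm.IsPerm n w ∧
    ∃ (L : List PartialPerm) (b : PartialPerm),
      (∀ u ∈ L, IsPredominant u ∨ IsCopredominant u ∨ IsVexillary u) ∧
      IsBlockSumList L b ∧ PartialPerm.IsCompletion b n w

/-- A nonempty partial permutation. -/
def NonemptyPP (u : PartialPerm) : Prop := 0 < u.rows ∨ 0 < u.cols

/-- An indecomposable permutation: not (the completion of) a block sum of two nonempty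
predominant partial permutations. -/
def IsIndecomposable (n : ℕ) (w : PartialPerm) : Prop :=
  ¬ ∃ u v b, IsPredominant u ∧ IsPredominant v ∧ NonemptyPP u ∧ NonemptyPP v ∧
      IsBlockSum u v b ∧ PartialPerm.IsCompletion b n w

/-! ## The polynomial ring, minors, Schubert determinantal ideals -/

/-- The polynomial ring `ℂ[z_{ij} : i, j ≥ 1]` (all variables `z_{ij}`, `(i,j) : ℕ × ℕ`). -/
abbrev Rring : Type := MvPolynomial (ℕ × ℕ) ℂ

/-- The variable `z_{ij}`. -/
def zvar (i j : ℕ) : Rring := MvPolynomial.X (i, j)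

/-- The generic matrix `Z`. -/
def zmat : ℕ → ℕ → Rring := fun i j => zvar i j

/-- The generic matrix `Z^S` with the variables in positions `S` specialized to `0`. -/
def zmatAvoid (S : Set (ℕ × ℕ)) : ℕ → ℕ → Rring :=
  fun i j => if (i, j) ∈ S then 0 else zvar i j

/-- The set of `k × k` minors of the top-left `i × j` submatrix of the matrix `f`. -/
def minorsIn (f : ℕ → ℕ → Rring) (k i j : ℕ) : Set Rring :=
  {g | ∃ rs cs : Fin k → ℕ, StrictMono rs ∧ StrictMono cs ∧
    (∀ a, 1 ≤ rs a ∧ rs a ≤ i) ∧ (∀ a, 1 ≤ cs a ∧ cs a ≤ j) ∧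
    g = Matrix.det (Matrix.of fun a b : Fin k => f (rs a) (cs b))}

/-- The Schubert determinantal ideal `I_w`. -/
def schubertIdeal (w : PartialPerm) : Ideal Rring :=
  Ideal.span {g | ∃ i j, 1 ≤ i ∧ i ≤ w.rows ∧ 1 ≤ j ∧ j ≤ w.cols ∧
    g ∈ minorsIn zmat (w.rank i j + 1) i j}

/-- The CDG generators of `I_w`. -/
def cdgGens (w : PartialPerm) : Set Rring :=
  {g | ∃ p ∈ w.domPart, g = zvar p.1 p.2} ∪
  {g | ∃ p ∈ w.essPrime, g ∈ minorsIn (zmatAvoid w.domPart) (w.rank p.1 p.2 + 1) p.1 p.2}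

/-! ## Monomial orders, initial ideals, Gröbner bases -/

/-- A monomial order on monomials in variables `σ`. -/
structure MonomialOrd (σ : Type) where
  le : (σ →₀ ℕ) → (σ →₀ ℕ) → Prop
  le_refl : ∀ a, le a a
  le_trans : ∀ a b c, le a b → le b c → le a c
  le_antisymm : ∀ a b, le a b → le b a → a = b
  le_total : ∀ a b, le a b ∨ le b a
  add_le_add : ∀ a b c, le a b → le (a + c) (b + c)
  zero_le : ∀ a, le 0 a

/-- `t` is the initial term of `f` with respect to the monomial order `ord`. -/
def IsInitTerm {σ : Type} (ord : MonomialOrd σ) (f t : MvPolynomial σ ℂ) : Prop :=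
  ∃ m ∈ f.support, (∀ m' ∈ f.support, ord.le m' m) ∧
    t = MvPolynomial.monomial m (MvPolynomial.coeff m f)

/-- The ideal generated by the initial terms of the members of `G`. -/
def initSpan {σ : Type} (ord : MonomialOrd σ) (G : Set (MvPolynomial σ ℂ)) :
    Ideal (MvPolynomial σ ℂ) :=
  Ideal.span {t | ∃ g ∈ G, IsInitTerm ord g t}

/-- The initial ideal of an ideal. -/
def initialIdeal {σ : Type} (ord : MonomialOrd σ) (I : Ideal (MvPolynomial σ ℂ)) :
    Ideal (MvPolynomial σ ℂ) :=
  initSpan ord (I : Set (MvPolynomial σ ℂ))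

/-- `G` is a Gröbner basis of `I` with respect to `ord`. -/
def IsGroebner {σ : Type} (ord : MonomialOrd σ) (G : Set (MvPolynomial σ ℂ))
    (I : Ideal (MvPolynomial σ ℂ)) : Prop :=
  G ⊆ (I : Set (MvPolynomial σ ℂ)) ∧ initSpan ord G = initialIdeal ord I

/-- A diagonal term order: the initial term of the determinant of any square submatrix
of `Z` is the product of the entries on its main diagonal. -/
def IsDiagonalOrder (ord : MonomialOrd (ℕ × ℕ)) : Prop :=
  ∀ (k : ℕ) (rs cs : Fin k → ℕ), StrictMono rs → StrictMono cs →
    (∀ a, 1 ≤ rs a) → (∀ a, 1 ≤ cs a) →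
    IsInitTerm ord (Matrix.det (Matrix.of fun a b : Fin k => zmat (rs a) (cs b)))
      (∏ a, zvar (rs a) (cs a))

/-- `w` is CDG: the CDG generators are a Gröbner basis of `I_w` for every diagonal
term order. -/
def IsCDG (w : PartialPerm) : Prop :=
  ∀ ord : MonomialOrd (ℕ × ℕ), IsDiagonalOrder ord →
    IsGroebner ord (cdgGens w) (schubertIdeal w)

/-- `J_w`: the monomial ideal generated by the initial terms of the CDG generators. -/
def Jideal (ord : MonomialOrd (ℕ × ℕ)) (w : PartialPerm) : Ideal Rring :=
  initSpan ord (cdgGens w)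

/-- The initial terms of the nonzero maximal minors of `Z^S_{[i],[j]}`. -/
def JlamGens (ord : MonomialOrd (ℕ × ℕ)) (S : Set (ℕ × ℕ)) (i j : ℕ) : Set Rring :=
  {t | ∃ g ∈ minorsIn (zmatAvoid S) (min i j) i j, g ≠ 0 ∧ IsInitTerm ord g t}

/-- `J^λ_{ij}`: the ideal generated by the initial terms of the nonzero maximal minors
of `Z^λ_{[i],[j]}`. -/
def Jlam (ord : MonomialOrd (ℕ × ℕ)) (S : Set (ℕ × ℕ)) (i j : ℕ) : Ideal Rring :=
  Ideal.span (JlamGens ord S i j)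

/-- The pullback of a monomial order along the variable shift
`z_{ij} ↦ z_{i+a, j+b}`; this is the order induced on the variables of a block. -/
def MonomialOrd.pullback (ord : MonomialOrd (ℕ × ℕ)) (a b : ℕ) : MonomialOrd (ℕ × ℕ) where
  le m m' := ord.le (Finsupp.mapDomain (fun p : ℕ × ℕ => (p.1 + a, p.2 + b)) m)
    (Finsupp.mapDomain (fun p : ℕ × ℕ => (p.1 + a, p.2 + b)) m')
  le_refl := fun _ => ord.le_refl _
  le_trans := fun _ _ _ h h' => ord.le_trans _ _ _ h h'
  le_antisymm := fun x y h h' => by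
    have hinj : Function.Injective (fun p : ℕ × ℕ => (p.1 + a, p.2 + b)) := by
      intro p q hpq
      simp only [Prod.mk.injEq] at hpq
      exact Prod.ext (by omega) (by omega)
    exact Finsupp.mapDomain_injective hinj (ord.le_antisymm _ _ h h')
  le_total := fun _ _ => ord.le_total _ _
  add_le_add := fun x y c h => by
    simpa only [Finsupp.mapDomain_add] using ord.add_le_add _ _ _ h
  zero_le := fun x => by
    simpa only [Finsupp.mapDomain_zero] using ord.zero_le _

/-- The substitution `↓_a : z_{ij} ↦ z_{i+a, j}`. -/
def vshiftP (a : ℕ) : Rring → Rring :=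
  MvPolynomial.rename (fun p : ℕ × ℕ => (p.1 + a, p.2))

/-- The substitution `→_b : z_{ij} ↦ z_{i, j+b}`. -/
def hshiftP (b : ℕ) : Rring → Rring :=
  MvPolynomial.rename (fun p : ℕ × ℕ => (p.1, p.2 + b))

/-! ## Bumpless pipe dreams -/

/-- The six tiles. -/
inductive Tile
  | blank | cross | horiz | vert | se | nw
deriving DecidableEq

namespace Tile

/-- The tile has a pipe segment reaching its north edge. -/
def hasN : Tile → Bool | .cross => true | .vert => true | .nw => true | _ => false
/-- The tile has a pipe segment reaching its south edge. -/
def hasS : Tile → Bool | .cross => true | .vert => true | .se => true | _ => false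
/-- The tile has a pipe segment reaching its east edge. -/
def hasE : Tile → Bool | .cross => true | .horiz => true | .se => true | _ => false
/-- The tile has a pipe segment reaching its west edge. -/
def hasW : Tile → Bool | .cross => true | .horiz => true | .nw => true | _ => false

end Tile

/-- Directions of travel of a pipe. -/
inductive PDir
  | south | west
deriving DecidableEq

/-- One step of a pipe traversal in the tiling `T` of the `n × n` grid:
the state `(i, j, d)` means the pipe is traversing tile `(i,j)` moving in direction `d`;
`Sum.inr c` means the pipe has exited through the bottom edge in column `c`. -/
def pipeStep (T : ℕ → ℕ → Tile) (n : ℕ) : ℕ × ℕ × PDir → (ℕ × ℕ × PDir) ⊕ ℕ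
  | (i, j, PDir.west) =>
      match T i j with
      | Tile.se => if i = n then Sum.inr j else Sum.inl (i + 1, j, PDir.south)
      | _ => Sum.inl (i, j - 1, PDir.west)
  | (i, j, PDir.south) =>
      match T i j with
      | Tile.nw => Sum.inl (i, j - 1, PDir.west)
      | _ => if i = n then Sum.inr j else Sum.inl (i + 1, j, PDir.south)

/-- The state of the pipe entering at the right edge of row `i` after `k` steps. -/
def pipeState (T : ℕ → ℕ → Tile) (n i k : ℕ) : (ℕ × ℕ × PDir) ⊕ ℕ :=
  (Sum.elim (pipeStep T n) Sum.inr)^[k] (Sum.inl (i, n, PDir.west))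

/-- The pipe entering at the right edge of row `i` visits the cell `p`. -/
def pipeVisits (T : ℕ → ℕ → Tile) (n i : ℕ) (p : ℕ × ℕ) : Prop :=
  ∃ k d, pipeState T n i k = Sum.inl (p.1, p.2, d)

/-- A bumpless pipe dream on the `n × n` grid (1-indexed): a tiling by the six tiles
such that pipes enter at the right edge, exit at the bottom edge, and pairwise cross
at most once. -/
structure BPD (n : ℕ) where
  T : ℕ → ℕ → Tile
  outside : ∀ i j, (i = 0 ∨ j = 0 ∨ n < i ∨ n < j) → T i j = Tile.blank
  matchH : ∀ i j, 1 ≤ i → i ≤ n → 1 ≤ j → j < n → (T i j).hasE = (T i (j + 1)).hasW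
  matchV : ∀ i j, 1 ≤ i → i < n → 1 ≤ j → j ≤ n → (T i j).hasS = (T (i + 1) j).hasN
  leftB : ∀ i, 1 ≤ i → i ≤ n → (T i 1).hasW = false
  topB : ∀ j, 1 ≤ j → j ≤ n → (T 1 j).hasN = false
  rightB : ∀ i, 1 ≤ i → i ≤ n → (T i n).hasE = true
  botB : ∀ j, 1 ≤ j → j ≤ n → (T n j).hasS = true
  exits : ∀ i, 1 ≤ i → i ≤ n → ∃ k c, pipeState T n i k = Sum.inr c
  reduced : ∀ i i', 1 ≤ i → i < i' → i' ≤ n →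
    {p : ℕ × ℕ | pipeVisits T n i p ∧ pipeVisits T n i' p ∧
      T p.1 p.2 = Tile.cross}.Subsingleton

/-- The diagram of a bumpless pipe dream: its blank tiles. -/
def BPD.diag {n : ℕ} (P : BPD n) : Set (ℕ × ℕ) :=
  {p | 1 ≤ p.1 ∧ p.1 ≤ n ∧ 1 ≤ p.2 ∧ p.2 ≤ n ∧ P.T p.1 p.2 = Tile.blank}

/-- `BPD(w)`: the bumpless pipe dreams whose pipe entering in row `i` exits in the
column of the 1 of `w` in row `i`. -/
def bpdSet (n : ℕ) (w : PartialPerm) : Set (BPD n) :=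
  {P | ∀ i, 1 ≤ i → i ≤ n → ∃ k j, pipeState P.T n i k = Sum.inr j ∧ w.mat i j}

/-- The ideal `L_P = ⟨z_{ij} : (i,j) ∈ D(P)⟩`. -/
def linIdeal {n : ℕ} (P : BPD n) : Ideal Rring :=
  Ideal.span {g | ∃ p ∈ P.diag, g = zvar p.1 p.2}

/-- Restriction of a tiling to the first `m` rows and `n` columns. -/
def restrictT (T : ℕ → ℕ → Tile) (m n : ℕ) : ℕ → ℕ → Tile :=
  fun i j => if 1 ≤ i ∧ i ≤ m ∧ 1 ≤ j ∧ j ≤ n then T i j else Tile.blank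

/-- `BPD(w)` for a partial permutation `w`: the restrictions to the first
`w.rows` rows and `w.cols` columns of bumpless pipe dreams of the completion of `w`. -/
def bpdPSet (w : PartialPerm) : Set (ℕ → ℕ → Tile) :=
  {Q | ∃ (N : ℕ) (w' : PartialPerm) (P : BPD N),
    PartialPerm.IsCompletion w N w' ∧ P ∈ bpdSet N w' ∧ Q = restrictT P.T w.rows w.cols}

/-- The diagram of a restricted tiling on an `m × n` grid. -/
def pdiag (m n : ℕ) (Q : ℕ → ℕ → Tile) : Set (ℕ × ℕ) :=
  {p | 1 ≤ p.1 ∧ p.1 ≤ m ∧ 1 ≤ p.2 ∧ p.2 ≤ n ∧ Q p.1 p.2 = Tile.blank}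

/-- `L_P` for a restricted tiling. -/
def plinIdeal (w : PartialPerm) (Q : ℕ → ℕ → Tile) : Ideal Rring :=
  Ideal.span {g | ∃ p ∈ pdiag w.rows w.cols Q, g = zvar p.1 p.2}

/-! ## Double Schubert polynomials via bumpless pipe dreams -/

/-- The weight of a bumpless pipe dream: `∏_{(i,j) ∈ D(P)} (x_i - y_j)`, in
`ℤ[x, y]` where `x_i` is `X (Sum.inl i)` and `y_j` is `X (Sum.inr j)`. -/
def wtBPD {n : ℕ} (P : BPD n) : MvPolynomial (ℕ ⊕ ℕ) ℤ :=
  ∏ p ∈ (Finset.Icc 1 n ×ˢ Finset.Icc 1 n).filter (fun p => P.T p.1 p.2 = Tile.blank),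
    (MvPolynomial.X (Sum.inl p.1) - MvPolynomial.X (Sum.inr p.2))

/-- The double Schubert polynomial, defined via bumpless pipe dreams. -/
def schubPoly (n : ℕ) (w : PartialPerm) : MvPolynomial (ℕ ⊕ ℕ) ℤ :=
  ∑ᶠ P ∈ bpdSet n w, wtBPD P

end


/-! ## Auxiliary material for the block sum theorem -/

noncomputable section BlockSumAux

open scoped Classical

lemma PartialPerm.eq_of_fields (w w' : PartialPerm) (hr : w.rows = w'.rows)
    (hc : w.cols = w'.cols) (hm : w.mat = w'.mat) : w = w' := by
  cases w; cases w'
  cases hr; cases hc; cases hm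
  rfl

/-- Key one-sided step: diagrams equal (plus sizes) and rows below `i` agree
force row `i` to transfer. -/
lemma matTransfer (w w' : PartialPerm) (hr : w.rows = w'.rows)
    (hc : w.cols = w'.cols) (hd : w.diagram = w'.diagram) (i : ℕ)
    (IH : ∀ i' < i, ∀ j, w.mat i' j ↔ w'.mat i' j) (j : ℕ) (h : w.mat i j) :
    w'.mat i j := by
  obtain ⟨hi1, hi2, hj1, hj2⟩ := w.mat_support i j h
  have hnotw : (i, j) ∉ w.diagram := fun hmem => hmem.2.2.2.2.1 j le_rfl h
  have hnot : (i, j) ∉ w'.diagram := by rwa [hd] at hnotw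
  have hnot2 : ¬ ((∀ j' ≤ j, ¬ w'.mat i j') ∧ (∀ i' ≤ i, ¬ w'.mat i' j)) :=
    fun hh => hnot ⟨hi1, by omega, hj1, by omega, hh.1, hh.2⟩
  rcases not_and_or.mp hnot2 with hA | hB
  · -- a dot of w' in row i at column j' ≤ j
    push_neg at hA
    obtain ⟨j', hj'le, hj'⟩ := hA
    rcases eq_or_lt_of_le hj'le with hEq | hlt
    · rwa [hEq] at hj'
    · exfalso
      obtain ⟨hi1', hi2', hj1', hj2'⟩ := w'.mat_support i j' hj'
      have hnotw' : (i, j') ∉ w'.diagram := fun hmem => hmem.2.2.2.2.1 j' le_rfl hj'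
      have hnotw2 : (i, j') ∉ w.diagram := by rwa [← hd] at hnotw'
      have hnot3 : ¬ ((∀ j'' ≤ j', ¬ w.mat i j'') ∧ (∀ i'' ≤ i, ¬ w.mat i'' j')) :=
        fun hh => hnotw2 ⟨hi1, hi2, hj1', by omega, hh.1, hh.2⟩
      rcases not_and_or.mp hnot3 with hC | hD
      · push_neg at hC
        obtain ⟨j'', hj''le, hj''⟩ := hC
        have := w.mat_row i j'' j hj'' h
        omega
      · push_neg at hD
        obtain ⟨i'', hi''le, hi''⟩ := hD
        rcases eq_or_lt_of_le hi''le with hEq | hlt2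
        · subst hEq
          have := w.mat_row i'' j' j hi'' h
          omega
        · have hw' : w'.mat i'' j' := (IH i'' hlt2 j').1 hi''
          have := w'.mat_col i'' i j' hw' hj'
          omega
  · -- a dot of w' in column j at row i' ≤ i
    push_neg at hB
    obtain ⟨i', hi'le, hi'⟩ := hB
    rcases eq_or_lt_of_le hi'le with hEq | hlt
    · rwa [hEq] at hi'
    · exfalso
      have hw : w.mat i' j := (IH i' hlt j).2 hi'
      have := w.mat_col i' i j hw h
      omega

/-- Two partial permutations of the same size with the same Rothe diagram are equal. -/
lemma PartialPerm.eq_of_diagram (w w' : PartialPerm) (hr : w.rows = w'.rows)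
    (hc : w.cols = w'.cols) (hd : w.diagram = w'.diagram) : w = w' := by
  have hm : ∀ i j, w.mat i j ↔ w'.mat i j := by
    intro i
    induction i using Nat.strong_induction_on with
    | _ i IH =>
      intro j
      constructor
      · exact matTransfer w w' hr hc hd i (fun i' h j' => IH i' h j') j
      · exact matTransfer w' w hr.symm hc.symm hd.symm i
          (fun i' h j' => (IH i' h j').symm) j
  exact PartialPerm.eq_of_fields w w' hr hc
    (funext fun i => funext fun j => propext (hm i j))

/-- Rank of `n` among naturals in `[1, n]` satisfying `P`. -/
def rkP (P : ℕ → Prop) (n : ℕ) : ℕ := ((Finset.Icc 1 n).filter P).card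

lemma rkP_mono (P : ℕ → Prop) {m n : ℕ} (h : m ≤ n) : rkP P m ≤ rkP P n :=
  Finset.card_le_card (Finset.filter_subset_filter _ (Finset.Icc_subset_Icc_right h))

lemma rkP_lt (P : ℕ → Prop) {m n : ℕ} (h : m < n) (h1 : 1 ≤ n) (hP : P n) :
    rkP P m < rkP P n := by
  apply Finset.card_lt_card
  constructor
  · exact Finset.filter_subset_filter _ (Finset.Icc_subset_Icc_right (by omega))
  · intro hsub
    have hn : n ∈ (Finset.Icc 1 n).filter P := by
      simp [Finset.mem_filter, Finset.mem_Icc, h1, hP]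
    have := hsub hn
    simp [Finset.mem_filter, Finset.mem_Icc] at this
    omega

lemma rkP_pos (P : ℕ → Prop) {n : ℕ} (h1 : 1 ≤ n) (hP : P n) : 1 ≤ rkP P n := by
  have : n ∈ (Finset.Icc 1 n).filter P := by
    simp [Finset.mem_filter, Finset.mem_Icc, h1, hP]
  exact Finset.card_pos.mpr ⟨n, this⟩

lemma rkP_inj (P : ℕ → Prop) {m n : ℕ} (hm : 1 ≤ m) (hn : 1 ≤ n) (hPm : P m)
    (hPn : P n) (h : rkP P m = rkP P n) : m = n := by
  rcases lt_trichotomy m n with hlt | hEq | hgt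
  · exact absurd h (Nat.ne_of_lt (rkP_lt P hlt hn hPn))
  · exact hEq
  · exact absurd h.symm (Nat.ne_of_lt (rkP_lt P hgt hm hPm))

lemma rkP_exists (P : ℕ → Prop) : ∀ n k, 1 ≤ k → k ≤ rkP P n →
    ∃ m, m ≤ n ∧ P m ∧ rkP P m = k := by
  intro n
  induction n with
  | zero =>
    intro k hk hkle
    simp [rkP] at hkle
    omega
  | succ n IH =>
    intro k hk hkle
    by_cases hcase : k ≤ rkP P n
    · obtain ⟨m, hm1, hm2, hm3⟩ := IH k hk hcase
      exact ⟨m, by omega, hm2, hm3⟩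
    · have hIcc : Finset.Icc 1 (n + 1) = insert (n + 1) (Finset.Icc 1 n) :=
        (Finset.insert_Icc_right_eq_Icc_add_one (by omega)).symm
      have hnotmem : (n + 1) ∉ (Finset.Icc 1 n).filter P := by
        simp [Finset.mem_filter, Finset.mem_Icc]
      by_cases hP : P (n + 1)
      · have hcard : rkP P (n + 1) = rkP P n + 1 := by
          unfold rkP
          rw [hIcc, Finset.filter_insert, if_pos hP, Finset.card_insert_of_notMem hnotmem]
        refine ⟨n + 1, le_rfl, hP, ?_⟩
        omega
      · exfalso
        have hcard : rkP P (n + 1) = rkP P n := by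
          unfold rkP
          rw [hIcc, Finset.filter_insert, if_neg hP]
        omega

/-- Empty rows of `u`. -/
def eRow (u : PartialPerm) (i : ℕ) : Prop := 1 ≤ i ∧ i ≤ u.rows ∧ ∀ j, ¬ u.mat i j

/-- Empty columns of `v`. -/
def fCol (v : PartialPerm) (j : ℕ) : Prop := 1 ≤ j ∧ j ≤ v.cols ∧ ∀ i, ¬ v.mat i j

/-- The block sum: `v` top right, `u` bottom left, plus a matching between the
empty rows of `u` and the empty columns of `v`. -/
def bsum (u v : PartialPerm) : PartialPerm where
  rows := v.rows + u.rows
  cols := u.cols + v.cols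
  mat I J :=
    (∃ j, J = u.cols + j ∧ v.mat I j) ∨
    (∃ i, I = v.rows + i ∧ u.mat i J) ∨
    (∃ i j, I = v.rows + i ∧ J = u.cols + j ∧ eRow u i ∧ fCol v j ∧
      rkP (eRow u) i = rkP (fCol v) j)
  mat_support := by
    rintro I J (⟨j, rfl, hv⟩ | ⟨i, rfl, hu⟩ | ⟨i, j, rfl, rfl, hE, hF, _⟩)
    · obtain ⟨h1, h2, h3, h4⟩ := v.mat_support I j hv
      omega
    · obtain ⟨h1, h2, h3, h4⟩ := u.mat_support i J hu
      omega
    · obtain ⟨hE1, hE2, _⟩ := hE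
      obtain ⟨hF1, hF2, _⟩ := hF
      omega
  mat_row := by
    rintro I J J'
      (⟨j, rfl, hv⟩ | ⟨i, rfl, hu⟩ | ⟨i, j, rfl, rfl, hE, hF, hrk⟩) <;>
      rintro (⟨j', rfl, hv'⟩ | ⟨i', hI', hu'⟩ | ⟨i', j', hI', rfl, hE', hF', hrk'⟩)
    · have := v.mat_row I j j' hv hv'
      omega
    · obtain ⟨h1, h2, h3, h4⟩ := v.mat_support I j hv
      obtain ⟨h1', h2', h3', h4'⟩ := u.mat_support i' J' hu'
      omega
    · obtain ⟨h1, h2, h3, h4⟩ := v.mat_support I j hv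
      obtain ⟨hE1, hE2, _⟩ := hE'
      omega
    · obtain ⟨h1, h2, h3, h4⟩ := u.mat_support i J hu
      obtain ⟨h1', h2', h3', h4'⟩ := v.mat_support (v.rows + i) j' hv'
      omega
    · have : i = i' := by omega
      subst this
      exact u.mat_row i J J' hu hu'
    · exfalso
      have : i = i' := by omega
      subst this
      exact hE'.2.2 J hu
    · obtain ⟨hE1, hE2, _⟩ := hE
      obtain ⟨h1', h2', h3', h4'⟩ := v.mat_support (v.rows + i) j' hv'
      omega
    · exfalso
      have : i = i' := by omega
      subst this
      exact hE.2.2 J' hu'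
    · have hii : i = i' := by omega
      subst hii
      have : j = j' := rkP_inj (fCol v) hF.1 hF'.1 hF hF' (by omega)
      omega
  mat_col := by
    rintro I I' J
      (⟨j, rfl, hv⟩ | ⟨i, rfl, hu⟩ | ⟨i, j, rfl, rfl, hE, hF, hrk⟩) <;>
      rintro (⟨j', hJ', hv'⟩ | ⟨i', rfl, hu'⟩ | ⟨i', j', rfl, hJ', hE', hF', hrk'⟩)
    · have : j = j' := by omega
      subst this
      exact v.mat_col I I' j hv hv'
    · obtain ⟨h1, h2, h3, h4⟩ := v.mat_support I j hv
      obtain ⟨h1', h2', h3', h4'⟩ := u.mat_support i' (u.cols + j) hu'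
      omega
    · exfalso
      have : j = j' := by omega
      subst this
      exact hF'.2.2 I hv
    · obtain ⟨h1, h2, h3, h4⟩ := u.mat_support i J hu
      obtain ⟨h1', h2', h3', h4'⟩ := v.mat_support I' j' hv'
      omega
    · have := u.mat_col i i' J hu hu'
      omega
    · exfalso
      obtain ⟨h1, h2, h3, h4⟩ := u.mat_support i J hu
      obtain ⟨hF1, hF2, _⟩ := hF'
      omega
    · exfalso
      have : j = j' := by omega
      subst this
      exact hF.2.2 I' hv'
    · exfalso
      obtain ⟨h1', h2', h3', h4'⟩ := u.mat_support i' (u.cols + j) hu'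
      obtain ⟨hF1, hF2, _⟩ := hF
      omega
    · have hjj : j = j' := by omega
      subst hjj
      have : i = i' := rkP_inj (eRow u) hE.1 hE'.1 hE hE' (by omega)
      omega

lemma bsum_isBlockSum (u v : PartialPerm) : IsBlockSum u v (bsum u v) := by
  refine ⟨rfl, rfl, ?_⟩
  ext ⟨I, J⟩
  constructor
  · rintro ⟨hI1, hI2, hJ1, hJ2, hrow, hcol⟩
    simp only [bsum] at hI2 hJ2 hrow hcol
    by_cases hIv : I ≤ v.rows
    · by_cases hJu : J ≤ u.cols
      · exact Or.inl (Or.inl ⟨hI1, hIv, hJ1, hJu⟩)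
      · -- v block
        refine Or.inl (Or.inr ⟨(I, J - u.cols), ?_, by simp; omega⟩)
        refine ⟨hI1, hIv, by omega, by omega, ?_, ?_⟩
        · intro j' hj' hv
          obtain ⟨h1, h2, h3, h4⟩ := v.mat_support I j' hv
          exact hrow (u.cols + j') (by omega) (Or.inl ⟨j', rfl, hv⟩)
        · intro i' hi' hv
          exact hcol i' hi' (Or.inl ⟨J - u.cols, by omega, hv⟩)
    · by_cases hJu : J ≤ u.cols
      · -- u block
        refine Or.inr ⟨(I - v.rows, J), ?_, by simp; omega⟩
        refine ⟨by omega, by omega, hJ1, hJu, ?_, ?_⟩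
        · intro j' hj' hu
          exact hrow j' (by omega) (Or.inr (Or.inl ⟨I - v.rows, by omega, hu⟩))
        · intro i' hi' hu
          exact hcol (v.rows + i') (by omega) (Or.inr (Or.inl ⟨i', rfl, hu⟩))
      · -- bottom-right block: impossible
        exfalso
        set i := I - v.rows with hi
        set j := J - u.cols with hj
        have hEi : eRow u i := by
          refine ⟨by omega, by omega, fun j0 hu => ?_⟩
          obtain ⟨h1, h2, h3, h4⟩ := u.mat_support i j0 hu
          exact hrow j0 (by omega) (Or.inr (Or.inl ⟨i, by omega, hu⟩))
        have hFj : fCol v j := by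
          refine ⟨by omega, by omega, fun i0 hv => ?_⟩
          obtain ⟨h1, h2, h3, h4⟩ := v.mat_support i0 j hv
          exact hcol i0 (by omega) (Or.inl ⟨j, by omega, hv⟩)
        have ha : 1 ≤ rkP (eRow u) i := rkP_pos _ (by omega) hEi
        have hb : 1 ≤ rkP (fCol v) j := rkP_pos _ (by omega) hFj
        by_cases hab : rkP (eRow u) i ≤ rkP (fCol v) j
        · obtain ⟨j0, hj0le, hj0F, hj0rk⟩ :=
            rkP_exists (fCol v) j (rkP (eRow u) i) ha hab
          refine hrow (u.cols + j0) (by omega)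
            (Or.inr (Or.inr ⟨i, j0, by omega, rfl, hEi, hj0F, hj0rk.symm⟩))
        · obtain ⟨i0, hi0le, hi0E, hi0rk⟩ :=
            rkP_exists (eRow u) i (rkP (fCol v) j) hb (by omega)
          refine hcol (v.rows + i0) (by omega)
            (Or.inr (Or.inr ⟨i0, j, rfl, by omega, hi0E, hFj, by omega⟩))
  · rintro ((⟨hI1, hI2, hJ1, hJ2⟩ | ⟨⟨i, j⟩, hmem, hEq⟩) | ⟨⟨i, j⟩, hmem, hEq⟩)
    · -- rectangle
      refine ⟨hI1, by simp [bsum]; omega, hJ1, by simp [bsum]; omega, ?_, ?_⟩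
      · rintro J' hJ' (⟨j', rfl, hv⟩ | ⟨i', rfl, hu⟩ | ⟨i', j', hIe, rfl, hE', hF', _⟩)
        · obtain ⟨h1, h2, h3, h4⟩ := v.mat_support I j' hv
          omega
        · obtain ⟨h1, h2, h3, h4⟩ := u.mat_support i' J' hu
          omega
        · obtain ⟨hE1, hE2, _⟩ := hE'
          omega
      · rintro I' hI' (⟨j', hJe, hv⟩ | ⟨i', rfl, hu⟩ | ⟨i', j', rfl, hJe, hE', hF', _⟩)
        · obtain ⟨h1, h2, h3, h4⟩ := v.mat_support I' j' hv
          omega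
        · obtain ⟨h1, h2, h3, h4⟩ := u.mat_support i' J hu
          omega
        · obtain ⟨hE1, hE2, _⟩ := hE'
          omega
    · -- v block
      simp only [Prod.mk.injEq] at hEq
      obtain ⟨hEq1, hEq2⟩ := hEq
      obtain ⟨hi1, hi2, hj1, hj2, hrowv, hcolv⟩ := hmem
      simp only [] at hi1 hi2 hj1 hj2 hrowv hcolv
      subst hEq1; subst hEq2
      refine ⟨hi1, by simp [bsum]; omega, by omega, by simp [bsum]; omega, ?_, ?_⟩
      · rintro J' hJ' (⟨j', rfl, hv⟩ | ⟨i', hIe, hu⟩ | ⟨i', j', hIe, hJ'e, hE', hF', _⟩)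
        · exact hrowv j' (by omega) hv
        · obtain ⟨h1, h2, h3, h4⟩ := u.mat_support i' J' hu
          omega
        · obtain ⟨hE1, hE2, _⟩ := hE'
          omega
      · rintro I' hI' (⟨j', hJe, hv⟩ | ⟨i', rfl, hu⟩ | ⟨i', j', rfl, hJe, hE', hF', _⟩)
        · have : j' = j := by omega
          subst this
          exact hcolv I' hI' hv
        · obtain ⟨h1, h2, h3, h4⟩ := u.mat_support i' (j + u.cols) hu
          omega
        · obtain ⟨hE1, hE2, _⟩ := hE'
          omega
    · -- u block
      simp only [Prod.mk.injEq] at hEq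
      obtain ⟨hEq1, hEq2⟩ := hEq
      obtain ⟨hi1, hi2, hj1, hj2, hrowu, hcolu⟩ := hmem
      simp only [] at hi1 hi2 hj1 hj2 hrowu hcolu
      subst hEq1; subst hEq2
      refine ⟨by omega, by simp [bsum]; omega, hj1, by simp [bsum]; omega, ?_, ?_⟩
      · rintro J' hJ' (⟨j', rfl, hv⟩ | ⟨i', hIe, hu⟩ | ⟨i', j', hIe, hJ'e, hE', hF', _⟩)
        · obtain ⟨h1, h2, h3, h4⟩ := v.mat_support (i + v.rows) j' hv
          omega
        · have : i' = i := by omega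
          subst this
          exact hrowu J' hJ' hu
        · obtain ⟨hF1, hF2, _⟩ := hF'
          omega
      · rintro I' hI' (⟨j', hJe, hv⟩ | ⟨i', rfl, hu⟩ | ⟨i', j', rfl, hJe, hE', hF', _⟩)
        · obtain ⟨h1, h2, h3, h4⟩ := v.mat_support I' j' hv
          omega
        · exact hcolu i' (by omega) hu
        · obtain ⟨hF1, hF2, _⟩ := hF'
          omega

end BlockSumAux

/-- existence and uniqueness of the block sum of two partial permutations. -/
theorem blockSum_existsUnique (u v : PartialPerm) :
    ∃! w : PartialPerm, IsBlockSum u v w := by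
  refine ⟨bsum u v, bsum_isBlockSum u v, fun w' hw' => ?_⟩
  have hb := bsum_isBlockSum u v
  exact PartialPerm.eq_of_diagram w' (bsum u v)
    (hw'.1.trans hb.1.symm) (hw'.2.1.trans hb.2.1.symm)
    (hw'.2.2.trans hb.2.2.symm)
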